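/- Let κ : ℝ → ℝ be continuous and suppose there exist a < b and a Jacobi solution z for κ that is not identically zero with z(a) = z(b) = 0. Then there exist T > 0 with [a,b] ⊆ [−T,T] and a piecewise C² function f : [−T,T] → ℝ such that I_κ(f) < 0. -/

import Mathlib

open Set

/-- A Jacobi solution for `κ` on `ℝ`: a `C²` function with `z'' + κ z = 0`. -/
def IsJacobi (κ z : ℝ → ℝ) : Prop :=
  ContDiff ℝ 2 z ∧ ∀ t, deriv (deriv z) t + κ t * z t = 0

/-- `f` is piecewise `C²` on `[a,b]`: continuous, and there is a partition
`a = t₀ < t₁ < ⋯ < tₙ = b` such that `f` is `C²` on each `[tᵢ, tᵢ₊₁]`. -/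
def PiecewiseC2On (f : ℝ → ℝ) (a b : ℝ) : Prop :=
  ContinuousOn f (Set.Icc a b) ∧
    ∃ (n : ℕ) (t : ℕ → ℝ), 0 < n ∧ t 0 = a ∧ t n = b ∧
      (∀ i, i < n → t i < t (i + 1)) ∧
      (∀ i, i < n → ContDiffOn ℝ 2 f (Set.Icc (t i) (t (i + 1))))

/-- The index form `I_κ(f) = ∫_a^b ((f')² - κ f²)`; the derivative `deriv f`
agrees a.e. with the (piecewise) derivative of `f`. -/
noncomputable def indexForm (κ f : ℝ → ℝ) (a b : ℝ) : ℝ :=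
  ∫ t in a..b, ((deriv f t) ^ 2 - κ t * (f t) ^ 2)

/-!
On `[a, b]` the Jacobi field `z` has index zero, and `z'(b) ≠ 0` by uniqueness for the linear
ODE. Cut `z` off by `0` left of `a` and add `ε` times a ramp, affine from `0` at `a` to `1` at
`b` and constant afterwards. Integrating by parts, the index pairing of a Jacobi field with any
`C¹` function is a boundary term, so the index becomes `2 ε z'(b) + O(ε²)`, which is negative for
small `ε` of sign opposite to `z'(b)`. The constant tail on `[b, T]` is admissible because no
boundary condition is imposed at `±T`.
-/

open MeasureTheory

lemma lipschitzWith_snd_mul_fst (c : ℝ) :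
    LipschitzWith (max 1 ‖c‖₊) (fun p : ℝ × ℝ => (p.2, c * p.1)) :=
  LipschitzWith.prod_snd.prodMk (mul_one ‖c‖₊ ▸ (lipschitzWith_smul c).comp LipschitzWith.prod_fst)

namespace IsJacobi

variable {κ z : ℝ → ℝ}

lemma differentiable (hz : IsJacobi κ z) : Differentiable ℝ z :=
  hz.1.differentiable two_ne_zero

lemma contDiff_deriv (hz : IsJacobi κ z) : ContDiff ℝ 1 (deriv z) :=
  hz.1.iterate_deriv' 1 1

lemma deriv_deriv (hz : IsJacobi κ z) (t : ℝ) : deriv (deriv z) t = -(κ t * z t) := by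
  linarith [hz.2 t]

lemma hasDerivAt_prodMk_deriv (hz : IsJacobi κ z) (t : ℝ) :
    HasDerivAt (fun s => (z s, deriv z s)) (deriv z t, -κ t * z t) t := by
  have h := (hz.differentiable t).hasDerivAt.prodMk
    ((hz.contDiff_deriv.differentiable one_ne_zero) t).hasDerivAt
  rwa [hz.deriv_deriv, ← neg_mul] at h

theorem eq_zero_of_deriv_eq_zero (hκ : Continuous κ) (hz : IsJacobi κ z) {b : ℝ}
    (hb : z b = 0) (hb' : deriv z b = 0) (t : ℝ) : z t = 0 := by
  obtain ⟨c, d, hb_mem, ht_mem⟩ : ∃ c d, b ∈ Ioo c d ∧ t ∈ Icc c d :=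
    ⟨min b t - 1, max b t + 1, by grind, by grind⟩
  obtain ⟨M, hM⟩ := isCompact_Icc.exists_bound_of_continuousOn (s := Icc c d) hκ.continuousOn
  have hlip : ∀ s ∈ Ioo c d, LipschitzOnWith (max 1 M.toNNReal)
      (fun p : ℝ × ℝ => (p.2, -κ s * p.1)) univ := by
    intro s hs
    have hMs := hM s (Ioo_subset_Icc_self hs)
    have hκs : ‖-κ s‖₊ ≤ M.toNNReal :=
      (Real.le_toNNReal_iff_coe_le ((norm_nonneg _).trans hMs)).2 (by simpa using hMs)
    exact ((lipschitzWith_snd_mul_fst _).weaken (max_le_max le_rfl hκs)).lipschitzOnWith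
  have h := ODE_solution_unique_of_mem_Icc hlip hb_mem
    (f := fun s => (z s, deriv z s)) (g := fun _ => 0)
    (hz.differentiable.continuous.prodMk hz.contDiff_deriv.continuous).continuousOn
    (fun s _ => hz.hasDerivAt_prodMk_deriv s) (fun _ _ => trivial) continuousOn_const
    (fun s _ => (hasDerivAt_const s (0 : ℝ × ℝ)).congr_deriv (by ext <;> simp)) (fun _ _ => trivial)
    (by simp [hb, hb']) ht_mem
  exact congrArg Prod.fst h

end IsJacobi

section PiecewiseC2

variable {f : ℝ → ℝ} {a b c : ℝ}

lemma ContDiffOn.piecewiseC2On (hab : a < b) (hf : ContDiffOn ℝ 2 f (Icc a b)) :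
    PiecewiseC2On f a b :=
  ⟨hf.continuousOn, 1, fun i => if i = 0 then a else b, one_pos, rfl, rfl,
    fun i hi => by simpa [Nat.lt_one_iff.mp hi] using hab,
    fun i hi => by simpa [Nat.lt_one_iff.mp hi] using hf⟩

lemma PiecewiseC2On.trans (hab : PiecewiseC2On f a b) (hbc : PiecewiseC2On f b c) :
    PiecewiseC2On f a c := by
  obtain ⟨hfab, n, t, hn, ht₀, htn, ht_lt, ht_C2⟩ := hab
  obtain ⟨hfbc, m, s, hm, hs₀, hsm, hs_lt, hs_C2⟩ := hbc
  set u : ℕ → ℝ := fun i => if i ≤ n then t i else s (i - n) with hu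
  have hu_cases : ∀ i < n + m, (i < n ∧ u i = t i ∧ u (i + 1) = t (i + 1)) ∨
      (i - n < m ∧ u i = s (i - n) ∧ u (i + 1) = s (i - n + 1)) := by
    intro i hi
    rcases lt_or_ge i n with hin | hni
    · exact Or.inl ⟨hin, if_pos hin.le, if_pos hin⟩
    · refine Or.inr ⟨by omega, ?_, ?_⟩
      · rcases hni.eq_or_lt with rfl | hni
        · simp [hu, htn, hs₀]
        · simp [hu, hni.not_ge]
      · simp [hu, show i - n + 1 = i + 1 - n by omega, hni.not_gt]
  refine ⟨(hfab.union_of_isClosed hfbc isClosed_Icc isClosed_Icc).mono Icc_subset_Icc_union_Icc,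
    n + m, u, by omega, by simp [hu, ht₀], by simp [hu, hsm, hm.ne'], fun i hi => ?_,
    fun i hi => ?_⟩
  · rcases hu_cases i hi with ⟨hin, hi₁, hi₂⟩ | ⟨hin, hi₁, hi₂⟩
    · rw [hi₁, hi₂]; exact ht_lt i hin
    · rw [hi₁, hi₂]; exact hs_lt _ hin
  · rcases hu_cases i hi with ⟨hin, hi₁, hi₂⟩ | ⟨hin, hi₁, hi₂⟩
    · rw [hi₁, hi₂]; exact ht_C2 i hin
    · rw [hi₁, hi₂]; exact hs_C2 _ hin

end PiecewiseC2

noncomputable def indexPairing (κ u v : ℝ → ℝ) (a b : ℝ) : ℝ :=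
  ∫ t in a..b, (deriv u t * deriv v t - κ t * (u t * v t))

section IndexForm

variable {κ f g u v : ℝ → ℝ} {a b c : ℝ}

lemma indexForm_eq_indexPairing : indexForm κ f a b = indexPairing κ f f a b := by
  simp only [indexForm, indexPairing, sq]

lemma indexForm_add_mul (hκ : Continuous κ) (hu : ContDiff ℝ 1 u) (hv : ContDiff ℝ 1 v)
    (ε : ℝ) : indexForm κ (fun t => u t + ε * v t) a b =
      indexForm κ u a b + 2 * ε * indexPairing κ u v a b + ε ^ 2 * indexForm κ v a b := by
  have hu' := hu.continuous_deriv_one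
  have hv' := hv.continuous_deriv_one
  have hderiv : ∀ t, deriv (fun t => u t + ε * v t) t = deriv u t + ε * deriv v t := fun t =>
    ((hu.differentiable one_ne_zero t).hasDerivAt.add
      ((hv.differentiable one_ne_zero t).hasDerivAt.const_mul ε)).deriv
  have hint : ∀ {F : ℝ → ℝ}, Continuous F → IntervalIntegrable F volume a b :=
    fun hF => hF.intervalIntegrable a b
  have hu₁ := hu.continuous
  have hv₁ := hv.continuous
  simp only [indexForm, indexPairing, hderiv]
  rw [← intervalIntegral.integral_const_mul, ← intervalIntegral.integral_const_mul,
    ← intervalIntegral.integral_add (hint (by fun_prop)) (hint (by fun_prop)),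
    ← intervalIntegral.integral_add (hint (by fun_prop)) (hint (by fun_prop))]
  congr 1 with t
  ring

lemma IsJacobi.indexPairing_eq {z : ℝ → ℝ} (hκ : Continuous κ) (hz : IsJacobi κ z)
    (hg : ContDiff ℝ 1 g) : indexPairing κ z g a b = deriv z b * g b - deriv z a * g a := by
  have hz' := hz.contDiff_deriv.continuous
  have hg' := hg.continuous_deriv_one
  have hg₁ := hg.continuous
  have hz₁ := hz.differentiable.continuous
  refine intervalIntegral.integral_eq_sub_of_hasDerivAt (f := fun t => deriv z t * g t)
    (fun t _ => ?_) (Continuous.intervalIntegrable (by fun_prop) a b)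
  refine ((hz.contDiff_deriv.differentiable one_ne_zero t).hasDerivAt.mul
    (hg.differentiable one_ne_zero t).hasDerivAt).congr_deriv ?_
  rw [hz.deriv_deriv]
  ring

lemma indexForm_congr_Ioo (hab : a ≤ b) (h : EqOn f g (Ioo a b)) :
    indexForm κ f a b = indexForm κ g a b := by
  simp only [indexForm, intervalIntegral.integral_of_le hab, integral_Ioc_eq_integral_Ioo]
  refine setIntegral_congr_fun measurableSet_Ioo fun t ht => ?_
  simp only [h ht, h.deriv isOpen_Ioo ht]

lemma intervalIntegrable_indexForm_integrand (hκ : Continuous κ) (hg : ContDiff ℝ 1 g)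
    (hab : a ≤ b) (h : EqOn f g (Ioo a b)) :
    IntervalIntegrable (fun t => deriv f t ^ 2 - κ t * f t ^ 2) volume a b := by
  have hg' := hg.continuous_deriv_one
  have hg₁ := hg.continuous
  rw [intervalIntegrable_iff_integrableOn_Ioo_of_le hab]
  refine IntegrableOn.congr_fun (f := fun t => deriv g t ^ 2 - κ t * g t ^ 2)
    ((Continuous.integrableOn_Icc (by fun_prop)).mono_set Ioo_subset_Icc_self)
    (fun t ht => ?_) measurableSet_Ioo
  simp only [h ht, h.deriv isOpen_Ioo ht]

lemma indexForm_add_indexForm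
    (hab : IntervalIntegrable (fun t => deriv f t ^ 2 - κ t * f t ^ 2) volume a b)
    (hbc : IntervalIntegrable (fun t => deriv f t ^ 2 - κ t * f t ^ 2) volume b c) :
    indexForm κ f a b + indexForm κ f b c = indexForm κ f a c :=
  intervalIntegral.integral_add_adjacent_intervals hab hbc

lemma indexForm_const (ε : ℝ) : indexForm κ (fun _ => ε) a b = -(ε ^ 2 * ∫ t in a..b, κ t) := by
  simp [indexForm, intervalIntegral.integral_neg, intervalIntegral.integral_mul_const, mul_comm]

end IndexForm

lemma exists_two_mul_mul_add_sq_mul_neg {p : ℝ} (hp : p ≠ 0) (C : ℝ) :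
    ∃ ε : ℝ, 2 * ε * p + ε ^ 2 * C < 0 := by
  refine ⟨-p / (|C| + 1), ?_⟩
  have hp2 : 0 < p ^ 2 := by positivity
  have hC : C - 2 * (|C| + 1) < 0 := by linarith [le_abs_self C, abs_nonneg C]
  have : 2 * (-p / (|C| + 1)) * p + (-p / (|C| + 1)) ^ 2 * C
      = p ^ 2 * (C - 2 * (|C| + 1)) / (|C| + 1) ^ 2 := by
    field_simp
    ring
  rw [this]
  exact div_neg_of_neg_of_pos (mul_neg_of_pos_of_neg hp2 hC) (by positivity)

noncomputable def jacobiTestFunction (z : ℝ → ℝ) (a b ε t : ℝ) : ℝ :=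
  if t ≤ a then 0 else if t ≤ b then z t + ε * ((t - a) / (b - a)) else ε

section JacobiTestFunction

variable {κ z : ℝ → ℝ} {a b c d ε : ℝ}

lemma jacobiTestFunction_of_le {t : ℝ} (ht : t ≤ a) : jacobiTestFunction z a b ε t = 0 :=
  if_pos ht

lemma eqOn_jacobiTestFunction_Icc (hza : z a = 0) :
    EqOn (jacobiTestFunction z a b ε) (fun t => z t + ε * ((t - a) / (b - a))) (Icc a b) := by
  intro t ht
  rcases ht.1.eq_or_lt with rfl | hat
  · simp [jacobiTestFunction, hza]
  · simp [jacobiTestFunction, hat.not_ge, ht.2]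

lemma eqOn_jacobiTestFunction_Ici (hab : a < b) (hzb : z b = 0) :
    EqOn (jacobiTestFunction z a b ε) (fun _ => ε) (Ici b) := by
  intro t (hbt : b ≤ t)
  rcases hbt.eq_or_lt with rfl | hbt
  · simp [jacobiTestFunction, hab.not_ge, hzb, div_self (sub_ne_zero.2 hab.ne')]
  · simp [jacobiTestFunction, (hab.trans hbt).not_ge, hbt.not_ge]

lemma piecewiseC2On_jacobiTestFunction (hz : ContDiff ℝ 2 z) (hza : z a = 0) (hzb : z b = 0)
    (hca : c < a) (hab : a < b) (hbd : b < d) :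
    PiecewiseC2On (jacobiTestFunction z a b ε) c d := by
  have hleft : ContDiffOn ℝ 2 (jacobiTestFunction z a b ε) (Icc c a) :=
    contDiffOn_const.congr fun _ ht => jacobiTestFunction_of_le ht.2
  have hmid : ContDiffOn ℝ 2 (jacobiTestFunction z a b ε) (Icc a b) :=
    (hz.add (contDiff_const.mul ((contDiff_id.sub contDiff_const).div_const _))).contDiffOn.congr
      (eqOn_jacobiTestFunction_Icc hza)
  have hright : ContDiffOn ℝ 2 (jacobiTestFunction z a b ε) (Icc b d) :=
    contDiffOn_const.congr ((eqOn_jacobiTestFunction_Ici hab hzb).mono Icc_subset_Ici_self)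
  exact (hleft.piecewiseC2On hca).trans ((hmid.piecewiseC2On hab).trans (hright.piecewiseC2On hbd))

lemma indexForm_jacobiTestFunction (hκ : Continuous κ) (hz : IsJacobi κ z) (hza : z a = 0)
    (hzb : z b = 0) (hca : c < a) (hab : a < b) (hbd : b < d) :
    indexForm κ (jacobiTestFunction z a b ε) c d = 2 * ε * deriv z b +
      ε ^ 2 * (indexForm κ (fun t => (t - a) / (b - a)) a b - ∫ t in b..d, κ t) := by
  set f := jacobiTestFunction z a b ε
  set r : ℝ → ℝ := fun t => (t - a) / (b - a)
  have hr : ContDiff ℝ 1 r := (contDiff_id.sub contDiff_const).div_const _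
  have hz₁ : ContDiff ℝ 1 z := hz.1.of_le one_le_two
  have h₁ : EqOn f (fun _ => 0) (Ioo c a) := fun _ ht => jacobiTestFunction_of_le ht.2.le
  have h₂ : EqOn f (fun t => z t + ε * r t) (Ioo a b) :=
    (eqOn_jacobiTestFunction_Icc hza).mono Ioo_subset_Icc_self
  have h₃ : EqOn f (fun _ => ε) (Ioo b d) :=
    (eqOn_jacobiTestFunction_Ici hab hzb).mono (Ioo_subset_Ioi_self.trans Ioi_subset_Ici_self)
  have i₁ := intervalIntegrable_indexForm_integrand hκ contDiff_const hca.le h₁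
  have i₂ := intervalIntegrable_indexForm_integrand hκ (hz₁.add (contDiff_const.mul hr)) hab.le h₂
  have i₃ := intervalIntegrable_indexForm_integrand hκ contDiff_const hbd.le h₃
  rw [← indexForm_add_indexForm (i₁.trans i₂) i₃, ← indexForm_add_indexForm i₁ i₂,
    indexForm_congr_Ioo hca.le h₁, indexForm_congr_Ioo hab.le h₂, indexForm_congr_Ioo hbd.le h₃,
    indexForm_const, indexForm_const, indexForm_add_mul hκ hz₁ hr,
    indexForm_eq_indexPairing (f := z), hz.indexPairing_eq hκ hz₁, hz.indexPairing_eq hκ hr]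
  simp [r, hza, hzb, div_self (sub_ne_zero.2 hab.ne')]
  ring

end JacobiTestFunction

/-- A pair of conjugate points (a nontrivial Jacobi solution vanishing at
`a < b`) produces a piecewise `C²` test function of strictly negative index on
some interval `[-T,T] ⊇ [a,b]`. -/
theorem conjugate_points_negative_index (κ : ℝ → ℝ) (hκ : Continuous κ)
    (a b : ℝ) (hab : a < b) (z : ℝ → ℝ) (hz : IsJacobi κ z)
    (hznz : ∃ t, z t ≠ 0) (hza : z a = 0) (hzb : z b = 0) :
    ∃ T : ℝ, 0 < T ∧ Set.Icc a b ⊆ Set.Icc (-T) T ∧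
      ∃ f : ℝ → ℝ, PiecewiseC2On f (-T) T ∧ indexForm κ f (-T) T < 0 := by
  obtain ⟨t, ht⟩ := hznz
  have hz'b : deriv z b ≠ 0 := fun h => ht (hz.eq_zero_of_deriv_eq_zero hκ hzb h t)
  set T := |a| + |b| + 1
  have hTa : -T < a := by linarith [neg_abs_le a, abs_nonneg b]
  have hbT : b < T := by linarith [le_abs_self b, abs_nonneg a]
  obtain ⟨ε, hε⟩ := exists_two_mul_mul_add_sq_mul_neg hz'b
    (indexForm κ (fun t => (t - a) / (b - a)) a b - ∫ t in b..T, κ t)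
  refine ⟨T, by positivity, Icc_subset_Icc hTa.le hbT.le, jacobiTestFunction z a b ε,
    piecewiseC2On_jacobiTestFunction hz.1 hza hzb hTa hab hbT, ?_⟩
  rwa [indexForm_jacobiTestFunction hκ hz hza hzb hTa hab hbT]
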